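/- Let L be a Lie algebra over a field F generated as a Lie algebra by a finite subset S, let N ≥ 2 be an integer, and set Y := S ∪ { [x_1, …, x_m] : x_1, …, x_m ∈ S, 2 ≤ m ≤ N−1 }, where [x_1, …, x_m] denotes the right-iterated bracket. Then L is generated by Y as an N-Lie algebra: L is the smallest F-subspace of L that contains Y and is stable under the N-fold bracket operation (x_1, …, x_N) ↦ [x_1, …, x_N]. -/

import Mathlib

open scoped BigOperators

/-- Right-iterated Lie bracket `[x₁, x₂, …, xₖ] = [x₁, [x₂, [… [x_{k-1}, xₖ] …]]]`. -/
def itBracket {L : Type*} [LieRing L] : List L → L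
  | [] => 0
  | [a] => a
  | a :: b :: l => ⁅a, itBracket (b :: l)⁆

lemma itBracket_singleton {L : Type*} [LieRing L] (a : L) : itBracket [a] = a := rfl

lemma itBracket_cons {L : Type*} [LieRing L] (a : L) {l : List L} (h : l ≠ []) :
    itBracket (a :: l) = ⁅a, itBracket l⁆ := by
  cases l with
  | nil => exact absurd rfl h
  | cons b t => rfl

lemma itBracket_append {L : Type*} [LieRing L] (l₁ : List L) {l₂ : List L} (h : l₂ ≠ []) :
    itBracket (l₁ ++ l₂) = itBracket (l₁ ++ [itBracket l₂]) := by
  induction l₁ with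
  | nil => simp [itBracket_singleton]
  | cons a t ih =>
      have h1 : t ++ l₂ ≠ [] := fun hc => h (List.append_eq_nil_iff.mp hc).2
      have h2 : t ++ [itBracket l₂] ≠ [] := by simp
      simp only [List.cons_append]
      rw [itBracket_cons a h1, itBracket_cons a h2, ih]

lemma ofFn_get_cast {L : Type*} (l : List L) {n : ℕ} (h : l.length = n) :
    List.ofFn (fun i : Fin n => l.get (Fin.cast h.symm i)) = l := by
  subst h; exact List.ofFn_get l

/-- Let `L` be a Lie algebra over a field `F` generated (as a Lie algebra) by a finite set `S`,
let `N ≥ 2`, and let `Y := S ∪ { [x₁, …, x_m] : xᵢ ∈ S, 2 ≤ m ≤ N - 1 }`.  Then `L` is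
generated by `Y` as an `N`-Lie algebra: every `F`-subspace of `L` containing `Y` and stable
under the `N`-fold bracket `(x₁, …, x_N) ↦ [x₁, …, x_N]` is all of `L` (so `L` is the smallest
such subspace). -/
theorem generates_as_nLieAlgebra (F L : Type*) [Field F] [LieRing L] [LieAlgebra F L]
    (N : ℕ) (hN : 2 ≤ N)
    (S : Finset L) (hS : LieSubalgebra.lieSpan F L (S : Set L) = ⊤)
    (Y : Set L)
    (hY : Y = (S : Set L) ∪
      {y : L | ∃ m : ℕ, 2 ≤ m ∧ m ≤ N - 1 ∧
        ∃ x : Fin m → L, (∀ i, x i ∈ S) ∧ y = itBracket (List.ofFn x)}) :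
    ∀ p : Submodule F L, Y ⊆ (p : Set L) →
      (∀ x : Fin N → L, (∀ i, x i ∈ p) → itBracket (List.ofFn x) ∈ p) → p = ⊤ := by
  intro p hYp hclose
  -- the set of all iterated brackets of elements of S
  set T : Set L := {y : L | ∃ l : List L, l ≠ [] ∧ (∀ a ∈ l, a ∈ S) ∧ y = itBracket l} with hT
  set M : Submodule F L := Submodule.span F T with hM
  -- M is stable under left bracket by elements of S
  have had : ∀ a ∈ S, ∀ m ∈ M, ⁅a, m⁆ ∈ M := by
    intro a ha m hm
    have hle : M ≤ M.comap (LieAlgebra.ad F L a) := by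
      rw [hM, Submodule.span_le]
      rintro t ⟨l, hl, hmem, rfl⟩
      simp only [Set.mem_preimage, SetLike.mem_coe, Submodule.mem_comap, LieAlgebra.ad_apply]
      rw [← itBracket_cons a hl]
      refine Submodule.subset_span ⟨a :: l, by simp, ?_, rfl⟩
      intro b hb
      rcases List.mem_cons.mp hb with rfl | hb
      · exact ha
      · exact hmem b hb
    have := hle hm
    rwa [Submodule.mem_comap, LieAlgebra.ad_apply] at this
  -- M is stable under left bracket by iterated brackets of S
  have hlist : ∀ l : List L, l ≠ [] → (∀ a ∈ l, a ∈ S) → ∀ m ∈ M, ⁅itBracket l, m⁆ ∈ M := by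
    intro l
    induction l with
    | nil => intro h; exact absurd rfl h
    | cons a t ih =>
        intro _ hmem m hm
        cases t with
        | nil =>
            rw [itBracket_singleton]
            exact had a (hmem a (by simp)) m hm
        | cons b t' =>
            rw [itBracket_cons a (by simp), lie_lie]
            have hS' : ∀ x ∈ b :: t', x ∈ S := fun x hx => hmem x (List.mem_cons_of_mem a hx)
            have haS := hmem a (by simp)
            exact sub_mem (had a haS _ (ih (by simp) hS' m hm))
              (ih (by simp) hS' _ (had a haS m hm))
  -- M is closed under brackets
  have hcl : ∀ x ∈ M, ∀ y ∈ M, ⁅x, y⁆ ∈ M := by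
    intro x hx y hy
    have hle : M ≤ M.comap (-(LieAlgebra.ad F L y)) := by
      rw [hM, Submodule.span_le]
      rintro t ⟨l, hl, hmem, rfl⟩
      simp only [Set.mem_preimage, SetLike.mem_coe, Submodule.mem_comap, LinearMap.neg_apply,
        LieAlgebra.ad_apply, lie_skew]
      exact hlist l hl hmem y hy
    have h2 := hle hx
    rwa [Submodule.mem_comap, LinearMap.neg_apply, LieAlgebra.ad_apply, lie_skew] at h2
  -- hence M is a Lie subalgebra containing S, so M = ⊤
  let K : LieSubalgebra F L := { M with lie_mem' := fun {x y} hx hy => hcl x hx y hy }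
  have hMtop : M = ⊤ := by
    have hle : LieSubalgebra.lieSpan F L (S : Set L) ≤ K := by
      rw [LieSubalgebra.lieSpan_le]
      intro a ha
      exact Submodule.subset_span ⟨[a], by simp, by simpa using ha, rfl⟩
    rw [hS] at hle
    rw [eq_top_iff]
    intro x _
    exact hle (LieSubalgebra.mem_top x)
  -- every iterated bracket of elements of S lies in p
  have hSY : (S : Set L) ⊆ Y := by rw [hY]; exact Set.subset_union_left
  have key : ∀ n : ℕ, ∀ l : List L, l.length = n → l ≠ [] → (∀ a ∈ l, a ∈ S) →
      itBracket l ∈ p := by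
    intro n
    induction n using Nat.strong_induction_on with
    | _ n ih =>
        intro l hln hl hmem
        by_cases hc : N ≤ l.length
        · -- split l = take (N-1) l ++ drop (N-1) l
          have hN1 : 1 ≤ N - 1 := by omega
          set l₁ := l.take (N - 1) with hl₁
          set l₂ := l.drop (N - 1) with hl₂
          have hlen₁ : l₁.length = N - 1 := by
            simp [hl₁]; omega
          have hlen₂ : l₂.length = l.length - (N - 1) := by simp [hl₂]
          have hl₂ne : l₂ ≠ [] := by
            intro hcon
            rw [hcon] at hlen₂; simp at hlen₂; omega
          have hz : itBracket l₂ ∈ p := by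
            refine ih l₂.length (by omega) l₂ rfl hl₂ne ?_
            intro a ha
            exact hmem a (List.drop_subset _ l ha)
          set z := itBracket l₂ with hzdef
          have hlenfull : (l₁ ++ [z]).length = N := by
            simp [hlen₁]; omega
          set x : Fin N → L := fun i => (l₁ ++ [z]).get (Fin.cast hlenfull.symm i) with hx
          have hofn : List.ofFn x = l₁ ++ [z] := ofFn_get_cast _ hlenfull
          have hxp : ∀ i, x i ∈ p := by
            intro i
            have : x i ∈ l₁ ++ [z] := List.get_mem _ _
            rcases List.mem_append.mp this with h1 | h2
            · exact hYp (hSY (hmem _ (List.take_subset _ l h1)))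
            · rw [List.mem_singleton.mp h2]; exact hz
          have := hclose x hxp
          rw [hofn] at this
          rwa [← List.take_append_drop (N - 1) l, ← hl₁, ← hl₂,
            itBracket_append l₁ hl₂ne, ← hzdef]
        · -- short lists: length < N
          push_neg at hc
          cases l with
          | nil => exact absurd rfl hl
          | cons a t =>
              cases t with
              | nil =>
                  rw [itBracket_singleton]
                  exact hYp (hSY (hmem a (by simp)))
              | cons b t' =>
                  apply hYp
                  rw [hY]
                  refine Or.inr ?_
                  refine ⟨(a :: b :: t').length, by simp, Nat.le_sub_one_of_lt hc, ?_⟩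
                  refine ⟨fun i => (a :: b :: t').get (Fin.cast rfl i), ?_, ?_⟩
                  · intro i; exact hmem _ (List.get_mem _ _)
                  · rw [ofFn_get_cast _ rfl]
  -- conclude
  have hTp : T ⊆ (p : Set L) := by
    rintro t ⟨l, hl, hmem, rfl⟩
    exact key l.length l rfl hl hmem
  have : M ≤ p := by rw [hM]; exact Submodule.span_le.mpr hTp
  rw [hMtop] at this
  exact top_le_iff.mp this
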